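/- Let g be a positive, symmetric, differentiable density on ℝ, decreasing near +∞, satisfying |(log g)'| ≤ Λ, Ḡ(y) ≍ g(y)y^{κ−1} as y → ∞ for some κ ∈ [1,2], y ↦ (1+y²)g(y) bounded, and g/φ increasing on [0,∞) from (g/φ)(0) < 1 to ∞. Then for every t ∈ (0,1) there exists ω₀ = ω₀(t) > 0 such that for all w ≤ ω₀: χ(r(w,t)) ≤ ζ(w), where r(w,t) = wt/((1−w)(1−t)), χ = (Φ̄/Ḡ)^{-1}, and ζ(w) = β^{-1}(1/w) with β = g/φ − 1. Moreover, for all w ∈ (0,1), χ(w) ≤ ξ(w) ≤ ζ(w), where ξ = (φ/g)^{-1}. -/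

import Mathlib

open MeasureTheory ProbabilityTheory Filter Set
open scoped Classical ENNReal

/-- The standard normal density `φ`. -/
noncomputable def stdphi (x : ℝ) : ℝ := (Real.sqrt (2 * Real.pi))⁻¹ * Real.exp (-(x ^ 2) / 2)

/-- The standard normal upper tail function `Φ̄`. -/
noncomputable def Phibar (s : ℝ) : ℝ := ∫ x in Set.Ioi s, stdphi x

/-- The inverse of `Φ̄` (as the generalized inverse). -/
noncomputable def PhibarInv (y : ℝ) : ℝ := sInf {x : ℝ | Phibar x ≤ y}

/-- The upper tail function `Ḡ(s) = ∫_s^∞ g`. -/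
noncomputable def Gbar (g : ℝ → ℝ) (s : ℝ) : ℝ := ∫ x in Set.Ioi s, g x

/-- The ℓ-value `ℓ(x; w, g)`. -/
noncomputable def lval (g : ℝ → ℝ) (w x : ℝ) : ℝ :=
  ((1 - w) * stdphi x) / ((1 - w) * stdphi x + w * g x)

/-- The q-value `q(x; w, g)`. -/
noncomputable def qval (g : ℝ → ℝ) (w x : ℝ) : ℝ :=
  ((1 - w) * Phibar |x|) / ((1 - w) * Phibar |x| + w * Gbar g |x|)

/-- `r(w,t) = wt/((1−w)(1−t))`. -/
noncomputable def rwt (w t : ℝ) : ℝ := w * t / ((1 - w) * (1 - t))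

/-- `β(x) = g(x)/φ(x) − 1`. -/
noncomputable def betaf (g : ℝ → ℝ) (x : ℝ) : ℝ := g x / stdphi x - 1

/-- `m̃(w) = −E₀[β(X,w)]`, the minus-expectation of the score at a null coordinate. -/
noncomputable def mtilde (g : ℝ → ℝ) (w : ℝ) : ℝ :=
  -∫ x, betaf g x / (1 + w * betaf g x) * stdphi x

/-- `m₁(μ,w) = E_μ[β(X,w)]` where `X ~ N(μ,1)`. -/
noncomputable def m1 (g : ℝ → ℝ) (μ w : ℝ) : ℝ :=
  ∫ x, betaf g x / (1 + w * betaf g x) * stdphi (x - μ)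

open scoped Topology

/-! Since `g/φ` increases on `[0, ∞)`, the tail ratio `Φ̄/Ḡ` strictly decreases there, so
`χ(u) ≤ b` as soon as `Φ̄(b) ≤ u Ḡ(b)`. At `b = ξ(w)` this holds because `φ ≤ w g` beyond `ξ(w)`.
At `b = ζ(w)`, which is large when `w` is small, Mills' ratio and the lower tail bound
`Ḡ(b) ≥ c g(b) b^(κ-1)` give `Φ̄(b) ≤ φ(b)/b ≤ w g(b)/b ≤ w t Ḡ(b) ≤ r(w,t) Ḡ(b)`.
Finally `ξ(w) ≤ ζ(w)` because `g/φ` equals `1/w` at `ξ(w)` and `1 + 1/w` at `ζ(w)`. -/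

lemma stdphi_pos (x : ℝ) : 0 < stdphi x := by
  unfold stdphi; positivity

lemma integrable_stdphi : Integrable stdphi :=
  ((integrable_exp_neg_mul_sq (by norm_num : (0 : ℝ) < 1 / 2)).const_mul
    (Real.sqrt (2 * Real.pi))⁻¹).congr
    (.of_forall fun x => by unfold stdphi; ring_nf)

lemma integrable_mul_stdphi : Integrable fun x => x * stdphi x :=
  ((integrable_mul_exp_neg_mul_sq (by norm_num : (0 : ℝ) < 1 / 2)).const_mul
    (Real.sqrt (2 * Real.pi))⁻¹).congr
    (.of_forall fun x => by unfold stdphi; ring_nf)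

lemma hasDerivAt_neg_stdphi (x : ℝ) : HasDerivAt (fun y => -stdphi y) (x * stdphi x) x := by
  have h : HasDerivAt (fun y : ℝ => -(y ^ 2) / 2) (-x) x := by
    simpa [neg_div] using (hasDerivAt_pow 2 x).neg.div_const 2
  exact ((h.exp.const_mul (Real.sqrt (2 * Real.pi))⁻¹).neg).congr_deriv
    (by simp only [stdphi]; ring)

lemma tendsto_stdphi_atTop : Tendsto stdphi atTop (𝓝 0) := by
  have h : Tendsto (fun x : ℝ => -(x ^ 2) / 2) atTop atBot :=
    (tendsto_neg_atTop_atBot.comp (tendsto_pow_atTop two_ne_zero)).atBot_div_const two_pos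
  have h' := (Real.tendsto_exp_atBot.comp h).const_mul (Real.sqrt (2 * Real.pi))⁻¹
  rwa [mul_zero] at h'

lemma setIntegral_mul_stdphi_Ioi (b : ℝ) : ∫ x in Ioi b, x * stdphi x = stdphi b := by
  simpa using integral_Ioi_of_hasDerivAt_of_tendsto' (fun x _ => hasDerivAt_neg_stdphi x)
    integrable_mul_stdphi.integrableOn tendsto_stdphi_atTop.neg

lemma Phibar_le_stdphi_div {b : ℝ} (hb : 0 < b) : Phibar b ≤ stdphi b / b := by
  calc Phibar b ≤ ∫ x in Ioi b, b⁻¹ * (x * stdphi x) := by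
        refine setIntegral_mono_on integrable_stdphi.integrableOn
          (integrable_mul_stdphi.const_mul _).integrableOn measurableSet_Ioi fun x hx => ?_
        rw [← mul_assoc, le_mul_iff_one_le_left (stdphi_pos x), inv_mul_eq_div,
          one_le_div hb]
        exact le_of_lt hx
    _ = stdphi b / b := by
        rw [integral_const_mul, setIntegral_mul_stdphi_Ioi, inv_mul_eq_div]

lemma setIntegral_Ioi_pos {f : ℝ → ℝ} {a : ℝ} (hf : ∀ x ∈ Ioi a, 0 < f x)
    (hint : IntegrableOn f (Ioi a)) : 0 < ∫ x in Ioi a, f x := by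
  rw [setIntegral_pos_iff_support_of_nonneg_ae
    (ae_restrict_of_forall_mem measurableSet_Ioi fun x hx => (hf x hx).le) hint]
  exact (by simp : 0 < volume (Ioi a)).trans_le (measure_mono fun x hx => ⟨(hf x hx).ne', hx⟩)

lemma Gbar_pos {g : ℝ → ℝ} (hpos : ∀ x, 0 < g x) (hint : Integrable g) (s : ℝ) :
    0 < Gbar g s :=
  setIntegral_Ioi_pos (fun x _ => hpos x) hint.integrableOn

section TailRatio

variable {f g : ℝ → ℝ}

lemma Gbar_le_mul_Gbar_of_le_mul (hf : ∀ x, 0 < f x) (hg : ∀ x, 0 ≤ g x)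
    (hfi : Integrable f) (hgi : Integrable g) {b w : ℝ}
    (hmono : MonotoneOn (fun x => g x / f x) (Ici b)) (hb : f b ≤ w * g b) :
    Gbar f b ≤ w * Gbar g b := by
  have hw : 0 ≤ w := by
    by_contra! hw
    nlinarith [hf b, hg b, mul_nonpos_of_nonpos_of_nonneg hw.le (hg b)]
  have hpt : ∀ z ∈ Ioi b, f z ≤ w * g z := by
    intro z hz
    have hbz : b ≤ z := le_of_lt hz
    have hratio := hmono self_mem_Ici hbz hbz
    rw [div_le_div_iff₀ (hf b) (hf z)] at hratio
    nlinarith [hf b, hf z, mul_le_mul_of_nonneg_right hb (hf z).le]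
  calc Gbar f b ≤ ∫ z in Ioi b, w * g z :=
        setIntegral_mono_on hfi.integrableOn (hgi.const_mul w).integrableOn measurableSet_Ioi hpt
    _ = w * Gbar g b := integral_const_mul w g

lemma Gbar_sub_Gbar (hgi : Integrable g) {a b : ℝ} (hab : a ≤ b) :
    Gbar g a - Gbar g b = ∫ x in a..b, g x :=
  intervalIntegral.integral_Ioi_sub_Ioi hgi.integrableOn hab

lemma strictAntiOn_Gbar_div_Gbar (hf : ∀ x, 0 < f x) (hg : ∀ x, 0 < g x)
    (hfi : Integrable f) (hgi : Integrable g) {a : ℝ}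
    (hmono : StrictMonoOn (fun x => g x / f x) (Ici a)) :
    StrictAntiOn (fun s => Gbar f s / Gbar g s) (Ici a) := by
  intro x hx y hy hxy
  set c := f y / g y
  have hlt : ∀ z ∈ Ioi y, 0 < c * g z - f z := by
    intro z hz
    have hratio := hmono hy (mem_Ici.2 (hy.trans (le_of_lt hz))) hz
    simp only at hratio
    rw [div_lt_div_iff₀ (hf y) (hf z)] at hratio
    rw [sub_pos, div_mul_eq_mul_div, lt_div_iff₀ (hg y)]
    linarith
  have hle : ∀ z ∈ Icc x y, c * g z ≤ f z := by
    intro z hz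
    have hratio := hmono.monotoneOn (mem_Ici.2 (le_trans hx hz.1)) hy hz.2
    rw [div_le_div_iff₀ (hf z) (hf y)] at hratio
    rw [div_mul_eq_mul_div, div_le_iff₀ (hg y)]
    linarith
  have htail : Gbar f y < c * Gbar g y := by
    have h := setIntegral_Ioi_pos hlt ((hgi.const_mul c).sub hfi).integrableOn
    rw [integral_sub (hgi.const_mul c).integrableOn hfi.integrableOn, integral_const_mul] at h
    exact sub_pos.1 h
  have hmid : c * (Gbar g x - Gbar g y) ≤ Gbar f x - Gbar f y := by
    rw [Gbar_sub_Gbar hgi hxy.le, Gbar_sub_Gbar hfi hxy.le, ← intervalIntegral.integral_const_mul]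
    exact intervalIntegral.integral_mono_on hxy.le ((hgi.const_mul c).intervalIntegrable)
      hfi.intervalIntegrable hle
  have hgap : 0 < Gbar g x - Gbar g y := by
    rw [Gbar_sub_Gbar hgi hxy.le]
    exact intervalIntegral.intervalIntegral_pos_of_pos hgi.intervalIntegrable hg hxy
  have hGy := Gbar_pos hg hgi y
  show Gbar f y / Gbar g y < Gbar f x / Gbar g x
  rw [div_lt_div_iff₀ hGy (Gbar_pos hg hgi x)]
  -- `Ḡ_f(x) Ḡ_g(y) - Ḡ_f(y) Ḡ_g(x) ≥ (Ḡ_g(x) - Ḡ_g(y)) (c Ḡ_g(y) - Ḡ_f(y)) > 0`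
  nlinarith [mul_lt_mul_of_pos_left htail hgap, mul_le_mul_of_nonneg_right hmid hGy.le]

lemma le_of_Gbar_eq_mul_of_Gbar_le_mul (hf : ∀ x, 0 < f x) (hg : ∀ x, 0 < g x)
    (hfi : Integrable f) (hgi : Integrable g) {a b u : ℝ}
    (hmono : StrictMonoOn (fun x => g x / f x) (Ici b))
    (ha : Gbar f a = u * Gbar g a) (hb : Gbar f b ≤ u * Gbar g b) : a ≤ b := by
  by_contra! hba
  have h := strictAntiOn_Gbar_div_Gbar hf hg hfi hgi hmono self_mem_Ici hba.le hba
  simp only [ha, mul_div_assoc, div_self (Gbar_pos hg hgi a).ne', mul_one] at h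
  rw [lt_div_iff₀ (Gbar_pos hg hgi b)] at h
  linarith

end TailRatio

lemma stdphi_le_mul_of_betaf_eq_inv {g : ℝ → ℝ} {w z : ℝ} (hw : 0 < w)
    (h : betaf g z = w⁻¹) : stdphi z ≤ w * g z := by
  have hφ := stdphi_pos z
  rw [betaf, sub_eq_iff_eq_add, div_eq_iff hφ.ne'] at h
  rw [h, ← mul_assoc, mul_add, mul_inv_cancel₀ hw.ne']
  nlinarith

lemma le_of_ratio_le_of_betaf_eq_inv {g : ℝ → ℝ}
    (hinc : StrictMonoOn (fun x => g x / stdphi x) (Ici 0)) {w x z : ℝ} (hx : 0 ≤ x)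
    (hz : 0 ≤ z) (hxw : g x / stdphi x ≤ w⁻¹) (h : betaf g z = w⁻¹) : x ≤ z := by
  rw [betaf, sub_eq_iff_eq_add] at h
  exact (hinc.le_iff_le hx hz).1 (by simp only [h]; linarith)

lemma Phibar_le_mul_Gbar_of_tail {g : ℝ → ℝ} {c t w κ z : ℝ} (hκ : 1 ≤ κ) (hc : 0 < c)
    (ht : 0 < t) (hw : 0 ≤ w) (hz : 1 ≤ z) (htcz : (t * c)⁻¹ ≤ z) (hg : 0 ≤ g z)
    (hφ : stdphi z ≤ w * g z) (htail : c * (g z * z ^ (κ - 1)) ≤ Gbar g z) :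
    Phibar z ≤ w * t * Gbar g z := by
  have hz0 : 0 < z := by linarith
  have hpow : 1 ≤ z ^ (κ - 1) := Real.one_le_rpow hz (by linarith)
  have htcz' : 1 ≤ t * c * z := by
    rwa [inv_le_iff_one_le_mul₀' (mul_pos ht hc)] at htcz
  calc Phibar z ≤ stdphi z / z := Phibar_le_stdphi_div hz0
    _ ≤ w * g z / z := by gcongr
    _ ≤ w * t * (c * (g z * z ^ (κ - 1))) := by
        rw [div_le_iff₀ hz0]
        have h1 : 1 ≤ t * c * z * z ^ (κ - 1) := by nlinarith
        nlinarith [mul_le_mul_of_nonneg_left h1 (mul_nonneg hw hg)]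
    _ ≤ w * t * Gbar g z := by gcongr

lemma rwt_pos {w t : ℝ} (hw0 : 0 < w) (hw1 : w < 1) (ht0 : 0 < t) (ht1 : t < 1) :
    0 < rwt w t := by
  unfold rwt
  have := mul_pos (sub_pos.2 hw1) (sub_pos.2 ht1)
  positivity

lemma rwt_le_one {w t : ℝ} (hw1 : w < 1) (ht1 : t < 1) (hwt : w + t ≤ 1) : rwt w t ≤ 1 := by
  unfold rwt
  rw [div_le_one (mul_pos (sub_pos.2 hw1) (sub_pos.2 ht1))]
  nlinarith

lemma mul_le_rwt {w t : ℝ} (hw0 : 0 ≤ w) (hw1 : w < 1) (ht0 : 0 ≤ t) (ht1 : t < 1) :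
    w * t ≤ rwt w t := by
  unfold rwt
  have hD : 0 < (1 - w) * (1 - t) := mul_pos (sub_pos.2 hw1) (sub_pos.2 ht1)
  rw [le_div_iff₀ hD]
  have : (1 - w) * (1 - t) ≤ 1 := by nlinarith
  nlinarith [mul_nonneg hw0 ht0]

lemma exists_Phibar_le_rwt_mul_Gbar_of_betaf_eq_inv {g : ℝ → ℝ} {c κ t y₀ : ℝ}
    (hpos : ∀ x, 0 < g x) (hinc : StrictMonoOn (fun x => g x / stdphi x) (Ici 0))
    (hκ : 1 ≤ κ) (hc : 0 < c) (ht0 : 0 < t) (ht1 : t < 1)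
    (htail : ∀ y ≥ y₀, c * (g y * y ^ (κ - 1)) ≤ Gbar g y) :
    ∃ ω₀ > 0, ω₀ ≤ 1 - t ∧ ∀ w, 0 < w → w ≤ ω₀ → ∀ z, 0 ≤ z → betaf g z = w⁻¹ →
      Phibar z ≤ rwt w t * Gbar g z := by
  set A := max (max y₀ 1) (t * c)⁻¹
  have hA1 : 1 ≤ A := le_max_of_le_left (le_max_right _ _)
  have hA_pos : 0 < g A / stdphi A := div_pos (hpos A) (stdphi_pos A)
  refine ⟨min (g A / stdphi A)⁻¹ (1 - t), lt_min (inv_pos.2 hA_pos) (by linarith),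
    min_le_right _ _, fun w hw0 hw z hz hzβ => ?_⟩
  have hwt : w ≤ 1 - t := hw.trans (min_le_right _ _)
  have hAz : A ≤ z := le_of_ratio_le_of_betaf_eq_inv hinc (by linarith) hz
    ((le_inv_comm₀ hw0 hA_pos).1 (hw.trans (min_le_left _ _))) hzβ
  have hz1 : 1 ≤ z := hA1.trans hAz
  have htail_z := htail z ((le_max_left _ _).trans ((le_max_left _ _).trans hAz))
  calc Phibar z ≤ w * t * Gbar g z :=
        Phibar_le_mul_Gbar_of_tail hκ hc ht0 hw0.le hz1 ((le_max_right _ _).trans hAz)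
          (hpos z).le (stdphi_le_mul_of_betaf_eq_inv hw0 hzβ) htail_z
    _ ≤ rwt w t * Gbar g z := by
        have hpow : 0 ≤ z ^ (κ - 1) := Real.rpow_nonneg (by linarith) _
        have hG : 0 ≤ Gbar g z := le_trans (by have := hpos z; positivity) htail_z
        gcongr
        exact mul_le_rwt hw0.le (by linarith) ht0.le ht1

theorem chi_xi_zeta_comparison_general
    (g : ℝ → ℝ) (κ : ℝ)
    (hpos : ∀ x, 0 < g x) (hdens : ∫ x, g x = 1)
    (hκ : κ ∈ Set.Icc (1 : ℝ) 2)
    (htail : ∃ c C : ℝ, 0 < c ∧ 0 < C ∧ ∃ y₀ : ℝ, ∀ y ≥ y₀,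
      c * (g y * y ^ (κ - 1)) ≤ Gbar g y ∧ Gbar g y ≤ C * (g y * y ^ (κ - 1)))
    (hinc : StrictMonoOn (fun x => g x / stdphi x) (Set.Ici 0))
    (h0 : g 0 / stdphi 0 < 1)
    (ξ χ ζ : ℝ → ℝ)
    (hξ : ∀ u : ℝ, 0 < u → u ≤ stdphi 0 / g 0 → 0 ≤ ξ u ∧ stdphi (ξ u) = u * g (ξ u))
    (hχ : ∀ u : ℝ, 0 < u → u ≤ 1 → 0 ≤ χ u ∧ Phibar (χ u) = u * Gbar g (χ u))
    (hζ : ∀ w : ℝ, 0 < w → w ≤ 1 → 0 ≤ ζ w ∧ betaf g (ζ w) = w⁻¹) :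
    (∀ t : ℝ, t ∈ Set.Ioo (0 : ℝ) 1 → ∃ ω₀ : ℝ, 0 < ω₀ ∧ ∀ w : ℝ, 0 < w → w ≤ ω₀ →
        χ (rwt w t) ≤ ζ w) ∧
      (∀ w : ℝ, w ∈ Set.Ioo (0 : ℝ) 1 → χ w ≤ ξ w ∧ ξ w ≤ ζ w) := by
  have hgi : Integrable g := .of_integral_ne_zero (by simp [hdens])
  have hχ_le {u b : ℝ} (hb : 0 ≤ b) (hu0 : 0 < u) (hu1 : u ≤ 1)
      (hPb : Phibar b ≤ u * Gbar g b) : χ u ≤ b :=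
    le_of_Gbar_eq_mul_of_Gbar_le_mul stdphi_pos hpos integrable_stdphi hgi
      (hinc.mono (Ici_subset_Ici.2 hb)) (hχ u hu0 hu1).2 hPb
  refine ⟨fun t ⟨ht0, ht1⟩ => ?_, fun w ⟨hw0, hw1⟩ => ?_⟩
  · obtain ⟨c, _, hc, -, y₀, htail⟩ := htail
    obtain ⟨ω₀, hω₀, hω₀t, hPhibar⟩ := exists_Phibar_le_rwt_mul_Gbar_of_betaf_eq_inv hpos hinc
      hκ.1 hc ht0 ht1 fun y hy => (htail y hy).1
    refine ⟨ω₀, hω₀, fun w hw0 hw => ?_⟩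
    obtain ⟨hζ0, hζβ⟩ := hζ w hw0 (by linarith)
    exact hχ_le hζ0 (rwt_pos hw0 (by linarith) ht0 ht1) (rwt_le_one (by linarith) ht1
      (by linarith)) (hPhibar w hw0 hw _ hζ0 hζβ)
  · have hw_le : w ≤ stdphi 0 / g 0 :=
      hw1.le.trans ((one_le_div (hpos 0)).2 (((div_lt_one (stdphi_pos 0)).1 h0).le))
    obtain ⟨hξ0, hξeq⟩ := hξ w hw0 hw_le
    obtain ⟨hζ0, hζβ⟩ := hζ w hw0 hw1.le
    refine ⟨hχ_le hξ0 hw0 hw1.le ?_, le_of_ratio_le_of_betaf_eq_inv hinc hξ0 hζ0 ?_ hζβ⟩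
    · exact Gbar_le_mul_Gbar_of_le_mul stdphi_pos (fun x => (hpos x).le) integrable_stdphi hgi
        (hinc.monotoneOn.mono (Ici_subset_Ici.2 hξ0)) hξeq.le
    · rw [hξeq, div_mul_cancel_right₀ (hpos _).ne']

/-- **Lemma (comparison of the thresholds `χ`, `ξ`, `ζ`).** Let `g` be a positive symmetric
differentiable density, decreasing near `+∞`, with `|(log g)'| ≤ Λ`, `Ḡ(y) ≍ g(y)y^{κ−1}` as
`y → ∞` (`κ ∈ [1,2]`), `(1+y²)g(y)` bounded, and `g/φ` increasing on `[0,∞)` from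
`(g/φ)(0) < 1` to `∞`. Then for every `t ∈ (0,1)` there is `ω₀ = ω₀(t) > 0` such that
`χ(r(w,t)) ≤ ζ(w)` for all `w ≤ ω₀`; moreover `χ(w) ≤ ξ(w) ≤ ζ(w)` for all `w ∈ (0,1)`. -/
theorem chi_xi_zeta_comparison
    (g : ℝ → ℝ) (Λ κ : ℝ)
    (hpos : ∀ x, 0 < g x) (hsymm : ∀ x, g (-x) = g x)
    (hdiff : Differentiable ℝ g) (hdens : ∫ x, g x = 1)
    (hdec : ∃ M : ℝ, StrictAntiOn g (Set.Ici M))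
    (hΛ : 0 < Λ) (hlip : ∀ x : ℝ, |deriv (fun y => Real.log (g y)) x| ≤ Λ)
    (hκ : κ ∈ Set.Icc (1 : ℝ) 2)
    (htail : ∃ c C : ℝ, 0 < c ∧ 0 < C ∧ ∃ y₀ : ℝ, ∀ y ≥ y₀,
      c * (g y * y ^ (κ - 1)) ≤ Gbar g y ∧ Gbar g y ≤ C * (g y * y ^ (κ - 1)))
    (hbdd : ∃ M : ℝ, ∀ y : ℝ, (1 + y ^ 2) * g y ≤ M)
    (hinc : StrictMonoOn (fun x => g x / stdphi x) (Set.Ici 0))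
    (h0 : g 0 / stdphi 0 < 1)
    (hinf : Filter.Tendsto (fun x => g x / stdphi x) Filter.atTop Filter.atTop)
    (ξ χ ζ : ℝ → ℝ)
    (hξ : ∀ u : ℝ, 0 < u → u ≤ stdphi 0 / g 0 → 0 ≤ ξ u ∧ stdphi (ξ u) = u * g (ξ u))
    (hχ : ∀ u : ℝ, 0 < u → u ≤ 1 → 0 ≤ χ u ∧ Phibar (χ u) = u * Gbar g (χ u))
    (hζ : ∀ w : ℝ, 0 < w → w ≤ 1 → 0 ≤ ζ w ∧ betaf g (ζ w) = w⁻¹) :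
    (∀ t : ℝ, t ∈ Set.Ioo (0 : ℝ) 1 → ∃ ω₀ : ℝ, 0 < ω₀ ∧ ∀ w : ℝ, 0 < w → w ≤ ω₀ →
        χ (rwt w t) ≤ ζ w) ∧
      (∀ w : ℝ, w ∈ Set.Ioo (0 : ℝ) 1 → χ w ≤ ξ w ∧ ξ w ≤ ζ w) :=
  chi_xi_zeta_comparison_general g κ hpos hdens hκ htail hinc h0 ξ χ ζ hξ hχ hζ
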